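/- arXiv:1905.11254 — 6 statements merged into one kernel-verified Lean document; each statement's English description precedes it below -/
import Mathlib

section
/- If a graph G on n vertices has a g-good-neighbor cut, then the number of edges of G is at most C(n,2) − (g+1)². -/
/-!
Split `G - F` into two nonempty sides `A` and `B` with no edges between them. A vertex of `A`
together with its at least `g` neighbours outside `F` lies inside `A`, so `|A| ≥ g + 1`, and
likewise `|B| ≥ g + 1`. The `|A| |B| ≥ (g + 1)²` pairs across the cut are non-edges of `G`.
-/

open SimpleGraph

/-- `F` is a g-good-neighbor cut of `G`: removing `F` disconnects `G`
and every vertex outside `F` has at least `g` neighbors outside `F`. -/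
def IsGNCut {V : Type*} [Fintype V] (G : SimpleGraph V) (g : ℕ) (F : Finset V) : Prop :=
  ¬ (G.induce ((↑F : Set V)ᶜ)).Preconnected ∧
    ∀ v : V, v ∉ F → g ≤ (G.neighborSet v \ (↑F : Set V)).ncard

/-- The g-good-neighbor connectivity `κ^g(G)`: minimum size of a g-good-neighbor cut. -/
noncomputable def gnConn {V : Type*} [Fintype V] (G : SimpleGraph V) (g : ℕ) : ℕ :=
  sInf {m | ∃ F : Finset V, IsGNCut G g F ∧ F.card = m}

/-- Classical vertex connectivity (as minimum size of a vertex cut). -/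
noncomputable def vConn {V : Type*} [Fintype V] (G : SimpleGraph V) : ℕ :=
  sInf {m | ∃ F : Finset V, ¬ (G.induce ((↑F : Set V)ᶜ)).Preconnected ∧ F.card = m}

namespace SimpleGraph

variable {V : Type*} (G : SimpleGraph V)

theorem exists_separation_of_not_preconnected_induce {S : Set V}
    (h : ¬ (G.induce S).Preconnected) :
    ∃ A B : Set V, A.Nonempty ∧ B.Nonempty ∧ Disjoint A B ∧ A ∪ B = S ∧
      ∀ x ∈ A, ∀ y ∈ B, ¬ G.Adj x y := by
  simp only [Preconnected, not_forall] at h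
  obtain ⟨a, b, hab⟩ := h
  refine ⟨Subtype.val '' {x | (G.induce S).Reachable a x},
    Subtype.val '' {x | (G.induce S).Reachable a x}ᶜ, ⟨a, a, Reachable.refl a, rfl⟩,
    ⟨b, b, hab, rfl⟩,
    (Set.disjoint_image_iff Subtype.val_injective).mpr disjoint_compl_right, ?_, ?_⟩
  · rw [← Set.image_union, Set.union_compl_self, Set.image_univ, Subtype.range_coe]
  · rintro _ ⟨x, hx, rfl⟩ _ ⟨y, hy, rfl⟩ hxy
    exact hy (hx.trans (induce_adj.mpr hxy).reachable)

theorem ncard_neighborSet_inter_add_one_le [Finite V] {A B S : Set V} (hAB : A ∪ B = S)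
    (hno : ∀ x ∈ A, ∀ y ∈ B, ¬ G.Adj x y) {x : V} (hx : x ∈ A) :
    (G.neighborSet x ∩ S).ncard + 1 ≤ A.ncard := by
  have hsub : insert x (G.neighborSet x ∩ S) ⊆ A := by
    refine Set.insert_subset hx fun y ⟨hxy, hyS⟩ => ?_
    rw [← hAB] at hyS
    exact hyS.resolve_right fun hyB => hno x hx y hyB hxy
  rw [← Set.ncard_insert_of_notMem fun hxx => G.irrefl hxx.1]
  exact Set.ncard_le_ncard hsub

theorem ncard_edgeSet_add_mul_le_choose_two [Fintype V] {A B : Set V} (hAB : Disjoint A B)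
    (hno : ∀ x ∈ A, ∀ y ∈ B, ¬ G.Adj x y) :
    G.edgeSet.ncard + A.ncard * B.ncard ≤ (Fintype.card V).choose 2 := by
  classical
  set P := (fun p : V × V => s(p.1, p.2)) '' (A ×ˢ B)
  have hP : P.ncard = A.ncard * B.ncard := by
    rw [Set.InjOn.ncard_image, Set.ncard_prod]
    rintro ⟨x, y⟩ ⟨hx, hy⟩ ⟨x', y'⟩ ⟨hx', hy'⟩ he
    rcases Sym2.eq_iff.mp he with ⟨rfl, rfl⟩ | ⟨rfl, -⟩
    · rfl
    · exact (hAB.ne_of_mem hx hy' rfl).elim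
  have hdisj : Disjoint G.edgeSet P := by
    refine Set.disjoint_right.mpr ?_
    rintro _ ⟨⟨x, y⟩, ⟨hx, hy⟩, rfl⟩
    exact hno x hx y hy
  have hsub : G.edgeSet ∪ P ⊆ (⊤ : SimpleGraph V).edgeSet := by
    refine Set.union_subset (edgeSet_mono le_top) ?_
    rintro _ ⟨⟨x, y⟩, ⟨hx, hy⟩, rfl⟩
    exact hAB.ne_of_mem hx hy
  calc G.edgeSet.ncard + A.ncard * B.ncard = (G.edgeSet ∪ P).ncard := by
        rw [Set.ncard_union_eq hdisj, hP]
    _ ≤ (⊤ : SimpleGraph V).edgeSet.ncard := Set.ncard_le_ncard hsub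
    _ = (Fintype.card V).choose 2 := by
        rw [← coe_edgeFinset, Set.ncard_coe_finset, card_edgeFinset_top_eq_card_choose_two]

end SimpleGraph

/-- If G on n vertices has a g-good-neighbor cut, then e(G) ≤ C(n,2) − (g+1)². -/
theorem stmt2 {V : Type*} [Fintype V] (G : SimpleGraph V) (g : ℕ) (F : Finset V)
    (h : IsGNCut G g F) :
    G.edgeSet.ncard ≤ (Fintype.card V).choose 2 - (g + 1) ^ 2 := by
  obtain ⟨hdis, hgood⟩ := h
  obtain ⟨A, B, ⟨a, ha⟩, ⟨b, hb⟩, hAB, hcover, hno⟩ :=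
    G.exists_separation_of_not_preconnected_induce hdis
  have hno' : ∀ y ∈ B, ∀ x ∈ A, ¬ G.Adj y x := fun y hy x hx hyx => hno x hx y hy hyx.symm
  have haF : a ∈ (↑F : Set V)ᶜ := hcover ▸ Or.inl ha
  have hbF : b ∈ (↑F : Set V)ᶜ := hcover ▸ Or.inr hb
  have hA := G.ncard_neighborSet_inter_add_one_le hcover hno ha
  have hB := G.ncard_neighborSet_inter_add_one_le ((Set.union_comm B A).trans hcover) hno' hb
  have hsq : (g + 1) ^ 2 ≤ A.ncard * B.ncard := by
    rw [sq]
    exact Nat.mul_le_mul ((hgood a haF).trans_lt hA) ((hgood b hbF).trans_lt hB)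
  have hcount := G.ncard_edgeSet_add_mul_le_choose_two hAB hno
  omega
end

section
/- Let G be a connected graph of order n admitting a g-good-neighbor cut, with 0 ≤ g ≤ min{Δ(G), ⌊(n−3)/2⌋}. Then κ(G) ≤ κ^g(G) ≤ n − 2g − 2. -/
open SimpleGraph

namespace SimpleGraph

variable {V : Type*} (G : SimpleGraph V) {s : Set V}

lemma insert_neighborSet_inter_subset_image_reachable (c : s) :
    insert (c : V) (G.neighborSet c ∩ s) ⊆ Subtype.val '' {w | (G.induce s).Reachable c w} := by
  rintro w (rfl | ⟨hcw, hw⟩)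
  · exact ⟨c, Reachable.refl c, rfl⟩
  · exact ⟨⟨w, hw⟩, Adj.reachable (by simpa using hcw), rfl⟩

lemma ncard_neighborSet_inter_lt_ncard_reachable [Finite V] (c : s) :
    (G.neighborSet c ∩ s).ncard < (Subtype.val '' {w | (G.induce s).Reachable c w}).ncard := by
  have hc : (c : V) ∉ G.neighborSet c ∩ s := fun h => G.irrefl h.1
  calc (G.neighborSet c ∩ s).ncard
      < (insert (c : V) (G.neighborSet c ∩ s)).ncard := by
        rw [Set.ncard_insert_of_notMem hc]; omega
    _ ≤ _ := Set.ncard_le_ncard (G.insert_neighborSet_inter_subset_image_reachable c)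

lemma two_mul_succ_le_ncard_of_not_preconnected [Finite V] {g : ℕ}
    (hs : ¬ (G.induce s).Preconnected) (hdeg : ∀ v ∈ s, g ≤ (G.neighborSet v ∩ s).ncard) :
    2 * (g + 1) ≤ s.ncard := by
  obtain ⟨a, b, hab⟩ : ∃ a b : s, ¬ (G.induce s).Reachable a b := by
    simpa [Preconnected] using hs
  let comp (c : s) : Set V := Subtype.val '' {w | (G.induce s).Reachable c w}
  have hcomp (c : s) : g + 1 ≤ (comp c).ncard :=
    (hdeg c c.2).trans_lt (G.ncard_neighborSet_inter_lt_ncard_reachable c)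
  have hdisj : Disjoint (comp a) (comp b) := by
    rw [Set.disjoint_left]
    rintro _ ⟨w, haw, rfl⟩ ⟨w', hbw, hw⟩
    cases Subtype.ext hw
    exact hab (haw.trans hbw.symm)
  calc 2 * (g + 1) ≤ (comp a).ncard + (comp b).ncard := by linarith [hcomp a, hcomp b]
    _ = (comp a ∪ comp b).ncard := (Set.ncard_union_eq hdisj).symm
    _ ≤ s.ncard := Set.ncard_le_ncard (Set.union_subset (by simp [comp]) (by simp [comp]))

end SimpleGraph

section GoodNeighborCut

variable {V : Type*} [Fintype V] {G : SimpleGraph V} {g : ℕ} {F : Finset V}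

lemma IsGNCut.card_le (hF : IsGNCut G g F) : F.card ≤ Fintype.card V - 2 * g - 2 := by
  have hcompl : 2 * (g + 1) ≤ ((F : Set V)ᶜ).ncard :=
    G.two_mul_succ_le_ncard_of_not_preconnected hF.1 fun v hv => by
      simpa only [Set.sdiff_eq] using hF.2 v hv
  have hsum := Set.ncard_add_ncard_compl (F : Set V)
  rw [Set.ncard_coe_finset, Nat.card_eq_fintype_card] at hsum
  omega

lemma gnConn_le_card (hF : IsGNCut G g F) : gnConn G g ≤ F.card :=
  Nat.sInf_le ⟨F, hF, rfl⟩

lemma vConn_le_gnConn (hex : ∃ F : Finset V, IsGNCut G g F) : vConn G ≤ gnConn G g := by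
  obtain ⟨F, hF⟩ := hex
  obtain ⟨F', hF', hcard⟩ := Nat.sInf_mem (s := {m | ∃ F : Finset V, IsGNCut G g F ∧ F.card = m})
    ⟨F.card, F, hF, rfl⟩
  exact Nat.sInf_le ⟨F', hF'.1, hcard⟩

end GoodNeighborCut

theorem stmt5_general {V : Type*} [Fintype V] (G : SimpleGraph V)
    (g : ℕ) (hex : ∃ F : Finset V, IsGNCut G g F) :
    vConn G ≤ gnConn G g ∧ gnConn G g ≤ Fintype.card V - 2 * g - 2 := by
  obtain ⟨F, hF⟩ := hex
  exact ⟨vConn_le_gnConn ⟨F, hF⟩, (gnConn_le_card hF).trans hF.card_le⟩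

/-- For connected G of order n with a g-good-neighbor cut, 0 ≤ g ≤ min{Δ(G), ⌊(n−3)/2⌋}:
κ(G) ≤ κ^g(G) ≤ n − 2g − 2. -/
theorem stmt5 {V : Type*} [Fintype V] (G : SimpleGraph V) [DecidableRel G.Adj]
    (hc : G.Connected) (g : ℕ) (hex : ∃ F : Finset V, IsGNCut G g F)
    (hg1 : g ≤ G.maxDegree) (hg2 : g ≤ (Fintype.card V - 3) / 2) :
    vConn G ≤ gnConn G g ∧ gnConn G g ≤ Fintype.card V - 2 * g - 2 :=
  stmt5_general G g hex
end

section
/- For the complete bipartite graph K_{a,b} with a ≥ b ≥ 2: K_{a,b} has a 0-good-neighbor cut and κ^0(K_{a,b}) = b, and K_{a,b} has no g-good-neighbor cut for any g ≥ 1. -/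
open SimpleGraph

/-!
In `K_{V,W}` any two vertices on opposite sides are adjacent, so `G - F` is connected as soon as
it meets both sides. Hence a disconnecting set contains a whole side, so `κ^0 ≥ min |V| |W|`,
while removing `W` leaves the (at least two) vertices of `V` isolated. For `g ≥ 1` a vertex
outside `F` has a neighbour outside `F`, on the other side, so `F` cannot disconnect.
-/

lemma isGNCut_zero_iff {V : Type*} [Fintype V] {G : SimpleGraph V} {F : Finset V} :
    IsGNCut G 0 F ↔ ¬(G.induce (↑F : Set V)ᶜ).Preconnected := by
  simp [IsGNCut]

namespace SimpleGraph

variable {V W : Type*}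

lemma completeBipartiteGraph_induce_preconnected_of_adj {s : Set (V ⊕ W)} {u w : V ⊕ W}
    (hu : u ∈ s) (hw : w ∈ s) (huw : (completeBipartiteGraph V W).Adj u w) :
    ((completeBipartiteGraph V W).induce s).Preconnected := by
  wlog hleft : u.isLeft generalizing u w
  · exact this hw hu huw.symm (by cases u <;> cases w <;> simp_all)
  obtain ⟨x, rfl⟩ := Sum.isLeft_iff.mp hleft
  obtain ⟨y, rfl⟩ : ∃ y, w = Sum.inr y := by cases w <;> simp_all
  have hreach : ∀ v : s, ((completeBipartiteGraph V W).induce s).Reachable v ⟨_, hw⟩ := by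
    rintro ⟨v | v, hv⟩
    · exact Adj.reachable (by simp)
    · exact (Adj.reachable (v := ⟨_, hu⟩) (by simp)).trans (Adj.reachable (by simp))
  exact fun v v' => (hreach v).trans (hreach v').symm

lemma completeBipartiteGraph_induce_compl_range_inr_eq_bot :
    (completeBipartiteGraph V W).induce (Set.range Sum.inr)ᶜ = ⊥ := by
  ext ⟨u | u, hu⟩ ⟨v | v, hv⟩
  · simp
  · exact (hv ⟨v, rfl⟩).elim
  · exact (hu ⟨u, rfl⟩).elim
  · simp

lemma completeBipartiteGraph_induce_compl_range_inr_not_preconnected [Nontrivial V] :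
    ¬((completeBipartiteGraph V W).induce (Set.range Sum.inr)ᶜ).Preconnected := by
  obtain ⟨x, y, hxy⟩ := exists_pair_ne V
  rw [completeBipartiteGraph_induce_compl_range_inr_eq_bot, preconnected_bot_iff_subsingleton]
  intro h
  have := h.elim (⟨.inl x, by simp⟩ : ↥(Set.range (Sum.inr : W → V ⊕ W))ᶜ) ⟨.inl y, by simp⟩
  simp_all

variable [Fintype V] [Fintype W]

lemma min_card_le_card_of_not_preconnected_induce_compl {F : Finset (V ⊕ W)}
    (hF : ¬((completeBipartiteGraph V W).induce (↑F : Set (V ⊕ W))ᶜ).Preconnected) :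
    min (Fintype.card V) (Fintype.card W) ≤ F.card := by
  have hside : (∀ x, Sum.inl x ∈ F) ∨ ∀ y, Sum.inr y ∈ F := by
    by_contra! ⟨⟨x, hx⟩, ⟨y, hy⟩⟩
    exact hF (completeBipartiteGraph_induce_preconnected_of_adj (u := .inl x) (w := .inr y)
      (by simpa using hx) (by simpa using hy) (by simp))
  rcases hside with h | h
  · refine min_le_of_left_le ?_
    simpa using Finset.card_le_card (s := Finset.univ.map .inl) (by simpa [Finset.subset_iff])
  · refine min_le_of_right_le ?_
    simpa using Finset.card_le_card (s := Finset.univ.map .inr) (by simpa [Finset.subset_iff])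

lemma isGNCut_completeBipartiteGraph_univ_map_inr [Nontrivial V] :
    IsGNCut (completeBipartiteGraph V W) 0 (Finset.univ.map .inr) := by
  rw [isGNCut_zero_iff, Finset.coe_map, Finset.coe_univ, Set.image_univ]
  exact completeBipartiteGraph_induce_compl_range_inr_not_preconnected (V := V) (W := W)

lemma not_isGNCut_completeBipartiteGraph {g : ℕ} (hg : 1 ≤ g) (F : Finset (V ⊕ W)) :
    ¬IsGNCut (completeBipartiteGraph V W) g F := by
  rintro ⟨hdisc, hnbr⟩
  obtain ⟨u, hu⟩ : ∃ u, u ∉ F := by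
    by_contra! h
    exact hdisc fun v => absurd (h v) v.2
  obtain ⟨w, huw, hw⟩ := (Set.ncard_pos (Set.toFinite _)).mp (hg.trans (hnbr u hu))
  exact hdisc (completeBipartiteGraph_induce_preconnected_of_adj hu hw huw)

end SimpleGraph

/-- For K_{a,b}, a ≥ b ≥ 2: a 0-good-neighbor cut exists, κ^0 = b, and no
g-good-neighbor cut exists for g ≥ 1. -/
theorem stmt6 (a b : ℕ) (hb : 2 ≤ b) (hab : b ≤ a) :
    (∃ F : Finset (Fin a ⊕ Fin b), IsGNCut (completeBipartiteGraph (Fin a) (Fin b)) 0 F) ∧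
    gnConn (completeBipartiteGraph (Fin a) (Fin b)) 0 = b ∧
    ∀ g : ℕ, 1 ≤ g →
      ¬ ∃ F : Finset (Fin a ⊕ Fin b), IsGNCut (completeBipartiteGraph (Fin a) (Fin b)) g F := by
  have : Nontrivial (Fin a) := Fin.nontrivial_iff_two_le.mpr (hb.trans hab)
  have hcut := isGNCut_completeBipartiteGraph_univ_map_inr (V := Fin a) (W := Fin b)
  have hleast : IsLeast {m | ∃ F : Finset (Fin a ⊕ Fin b),
      IsGNCut (completeBipartiteGraph (Fin a) (Fin b)) 0 F ∧ F.card = m} b := by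
    refine ⟨⟨_, hcut, by simp⟩, ?_⟩
    rintro _ ⟨F, hF, rfl⟩
    simpa [hab] using min_card_le_card_of_not_preconnected_induce_compl (isGNCut_zero_iff.mp hF)
  exact ⟨⟨_, hcut⟩, hleast.csInf_eq, fun g hg ⟨F, hF⟩ => not_isGNCut_completeBipartiteGraph hg F hF⟩
end

section
/- For the wheel graph W_n with n ≥ 7 vertices, κ^g(W_n) = 3 for g = 0 and g = 1. -/
/-!
Deleting the hub and the rim vertices `0` and `3` cuts the rim edge `{1, 2}` off from the rim
path `4, …, n - 2`, which has at least two vertices because `n ≥ 7`; so every surviving vertex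
keeps a neighbour, and `κ¹ ≤ 3`, hence `κ⁰ ≤ 3`. Conversely, deleting at most two vertices never
disconnects a wheel: if the hub survives it is adjacent to everything, and otherwise at most one
rim vertex is gone and the rest of the rim cycle is a path.
-/

open SimpleGraph

/-- The wheel: a cycle on m vertices plus a hub (none) adjacent to all of them. -/
def wheel (m : ℕ) : SimpleGraph (Option (Fin m)) :=
  SimpleGraph.fromRel (fun x y =>
    x = none ∨ ∃ i j : Fin m, x = some i ∧ y = some j ∧ (j : ℕ) = ((i : ℕ) + 1) % m)

section GoodNeighborCut

variable {V : Type*} [Fintype V] {G : SimpleGraph V}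

lemma IsGNCut.mono {g g' : ℕ} {F : Finset V} (hF : IsGNCut G g F) (hg : g' ≤ g) :
    IsGNCut G g' F :=
  ⟨hF.1, fun v hv => hg.trans (hF.2 v hv)⟩

lemma gnConn_eq_of_isGNCut {g k : ℕ} {F : Finset V} (hF : IsGNCut G g F) (hcard : F.card = k)
    (hsmall : ∀ F : Finset V, F.card < k → (G.induce (↑F : Set V)ᶜ).Preconnected) :
    gnConn G g = k := by
  refine le_antisymm (Nat.sInf_le ⟨F, hF, hcard⟩) (le_csInf ⟨k, F, hF, hcard⟩ ?_)
  rintro _ ⟨F', hF', rfl⟩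
  by_contra! hlt
  exact hF'.1 (hsmall F' hlt)

end GoodNeighborCut

namespace SimpleGraph

variable {W : Type*} {H : SimpleGraph W}

lemma not_preconnected_of_adj_closed {S : Set W} (hS : ∀ ⦃x y⦄, H.Adj x y → x ∈ S → y ∈ S)
    {x y : W} (hx : x ∈ S) (hy : y ∉ S) : ¬ H.Preconnected := fun h => by
  obtain ⟨w⟩ := h x y
  obtain ⟨d, -, hd₁, hd₂⟩ := w.exists_boundary_dart S hx hy
  exact hd₂ (hS d.adj hd₁)

lemma preconnected_of_forall_reachable (c : W) (hc : ∀ v, H.Reachable c v) : H.Preconnected :=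
  fun u v => (hc u).symm.trans (hc v)

end SimpleGraph

open Fin.CommRing in
lemma Fin.add_one_add_natCast_ne_self {n : ℕ} [NeZero n] (k : Fin n) {t : ℕ} (ht : t + 1 < n) :
    k + 1 + (t : Fin n) ≠ k := by
  intro h
  have h0 : ((t + 1 : ℕ) : Fin n) = 0 := by push_cast; linear_combination h
  have := Nat.le_of_dvd (Nat.succ_pos t) (Fin.natCast_eq_zero.1 h0)
  omega

section Wheel

variable {m : ℕ}

lemma wheel_adj_none_some (i : Fin m) : (wheel m).Adj none (some i) := by
  simp [wheel]

lemma wheel_adj_some_some {i j : Fin m} :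
    (wheel m).Adj (some i) (some j) ↔ (i : ℕ) ≠ j ∧
      ((j : ℕ) = i + 1 ∨ (i : ℕ) = j + 1 ∨ ((i : ℕ) + 1 = m ∧ (j : ℕ) = 0) ∨
        ((j : ℕ) + 1 = m ∧ (i : ℕ) = 0)) := by
  have hi := i.isLt
  have hj := j.isLt
  simp only [wheel, fromRel_adj, ne_eq, Option.some.injEq, reduceCtorEq, false_or,
    exists_and_left, exists_eq_left']
  have hmod : ∀ a < m, (a + 1) % m = if a + 1 = m then 0 else a + 1 := fun a ha => by
    split_ifs with h
    · rw [h, Nat.mod_self]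
    · exact Nat.mod_eq_of_lt (by omega)
  rw [← Fin.val_inj, hmod i hi, hmod j hj]
  split_ifs <;> omega

lemma wheel_adj_some_add_one (i : Fin (m + 2)) : (wheel (m + 2)).Adj (some i) (some (i + 1)) := by
  rw [wheel_adj_some_some, Fin.val_add_one]
  split_ifs with h
  · rw [h, Fin.val_last]
    omega
  · omega

lemma exists_isGNCut_wheel_card_eq_three (hm : 4 ≤ m) :
    ∃ F, IsGNCut (wheel (m + 2)) 1 F ∧ F.card = 3 := by
  have h3 : ((3 : Fin (m + 2)) : ℕ) = 3 := by simp; omega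
  let F : Finset (Option (Fin (m + 2))) := {none, some 0, some 3}
  refine ⟨F, ?_, Finset.card_eq_three.2 ⟨_, _, _, by simp, by simp,
    by rw [Ne, Option.some_inj, Fin.ext_iff, h3]; simp, rfl⟩⟩
  have hF : ∀ i : Fin (m + 2), some i ∈ F ↔ (i : ℕ) = 0 ∨ (i : ℕ) = 3 := fun i => by
    simp only [F, Finset.mem_insert, Finset.mem_singleton, reduceCtorEq, false_or,
      Option.some.injEq, Fin.ext_iff, Fin.val_zero, h3]
  constructor
  · let S : Set ↥(↑F : Set (Option (Fin (m + 2))))ᶜ :=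
      {x | ∃ i : Fin (m + 2), x.1 = some i ∧ (i : ℕ) ≤ 2}
    refine not_preconnected_of_adj_closed (S := S) ?_ (x := ⟨some ⟨1, by omega⟩, by simp [hF]⟩)
      (y := ⟨some ⟨4, by omega⟩, by simp [hF]⟩) ⟨_, rfl, by simp⟩ ?_
    · rintro ⟨x, hx⟩ ⟨_ | j, hy⟩ hxy ⟨i, rfl, hi⟩
      · simp [F] at hy
      · simp only [Set.mem_compl_iff, Finset.mem_coe, hF] at hx hy
        rw [comap_adj, Function.Embedding.subtype_apply, Function.Embedding.subtype_apply,
          wheel_adj_some_some] at hxy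
        exact ⟨j, rfl, by omega⟩
    · rintro ⟨i, hi, hi4⟩
      cases Option.some.inj hi
      simp at hi4
  · rintro (_ | i) hi
    · simp [F] at hi
    rw [hF] at hi
    obtain ⟨j, hij, hj⟩ : ∃ j : Fin (m + 2),
        (wheel (m + 2)).Adj (some i) (some j) ∧ ¬((j : ℕ) = 0 ∨ (j : ℕ) = 3) := by
      by_cases h : (i : ℕ) + 1 < m + 2 ∧ (i : ℕ) + 1 ≠ 3
      · exact ⟨⟨i + 1, h.1⟩, wheel_adj_some_some.2 (by dsimp only; omega), by dsimp only; omega⟩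
      · exact ⟨⟨i - 1, by omega⟩, wheel_adj_some_some.2 (by dsimp only; omega), by dsimp only; omega⟩
    exact (Set.ncard_pos).2 ⟨some j, hij, by rwa [Finset.mem_coe, hF]⟩

open Fin.CommRing in
lemma wheel_induce_reachable_rim {S : Set (Option (Fin (m + 2)))} (k : Fin (m + 2))
    (hS : ∀ j, j ≠ k → some j ∈ S) (i : Fin (m + 2)) (hi : some i ∈ S) :
    ((wheel (m + 2)).induce S).Reachable ⟨some (k + 1), hS _ (add_ne_left.2 one_ne_zero)⟩
      ⟨some i, hi⟩ := by
  -- walk forward from `k + 1`: the vertex `k` would only be reached after `m + 1` steps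
  suffices h : ∀ t ≤ m + 1, ∀ v : S, v.1 = some (k + 1 + t) →
      ((wheel (m + 2)).induce S).Reachable ⟨some (k + 1), hS _ (add_ne_left.2 one_ne_zero)⟩ v by
    exact h _ (Nat.lt_succ_iff.1 (i - (k + 1)).isLt) _ (by simp)
  intro t
  induction t with
  | zero =>
    rintro _ ⟨v, hvS⟩ hv
    simp only [Nat.cast_zero, add_zero] at hv
    subst hv
    rfl
  | succ t ih =>
    intro ht v hv
    have hu : some (k + 1 + t) ∈ S := hS _ (Fin.add_one_add_natCast_ne_self k (by omega))
    refine (ih (by omega) ⟨_, hu⟩ rfl).trans (Adj.reachable ?_)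
    rw [comap_adj, Function.Embedding.subtype_apply, Function.Embedding.subtype_apply, hv,
      Nat.cast_succ, ← add_assoc]
    exact wheel_adj_some_add_one _

lemma wheel_induce_compl_preconnected (F : Finset (Option (Fin (m + 2)))) (hF : F.card < 3) :
    ((wheel (m + 2)).induce (↑F : Set (Option (Fin (m + 2))))ᶜ).Preconnected := by
  by_cases hnone : none ∈ F
  · obtain ⟨k, hk⟩ : ∃ k, F.eraseNone ⊆ {k} := Finset.card_le_one_iff_subset_singleton.1 (by
      rw [Finset.card_eraseNone_of_mem hnone]; omega)
    have hS : ∀ j, j ≠ k → some j ∈ (↑F : Set (Option (Fin (m + 2))))ᶜ := fun j hj hjF =>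
      hj (Finset.mem_singleton.1 (hk (Finset.mem_eraseNone.2 hjF)))
    refine preconnected_of_forall_reachable ⟨some (k + 1), hS _ (add_ne_left.2 one_ne_zero)⟩ ?_
    rintro ⟨_ | i, hi⟩
    · exact absurd hnone hi
    · exact wheel_induce_reachable_rim k hS i hi
  · refine preconnected_of_forall_reachable ⟨none, hnone⟩ ?_
    rintro ⟨_ | i, hi⟩
    · rfl
    · exact Adj.reachable (wheel_adj_none_some i)

end Wheel

/-- For the wheel W_n with n ≥ 7 vertices, κ^g(W_n) = 3 for g = 0, 1. -/
theorem stmt8 (n : ℕ) (hn : 7 ≤ n) (g : ℕ) (hg : g ≤ 1) :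
    gnConn (wheel (n - 1)) g = 3 := by
  obtain ⟨m, hm, hnm⟩ : ∃ m, 4 ≤ m ∧ n - 1 = m + 2 := ⟨n - 3, by omega, by omega⟩
  obtain ⟨F, hF, hcard⟩ := exists_isGNCut_wheel_card_eq_three hm
  rw [hnm]
  exact gnConn_eq_of_isGNCut (hF.mono hg) hcard wheel_induce_compl_preconnected
end

section
/- Let T*_n be the tree obtained from a star K_{1,n−t−1} with center v and r ≥ 2 further stars K_{1,a_1−1},…,K_{1,a_r−1} with centers w_1,…,w_r (where each a_i ≥ 2 and a_1+…+a_r = t) by adding edges vw_1,…,vw_r. If 4 ≤ t ≤ (n+2)/2, then κ^1(T*_n) = n − t. -/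
/-!
A 1-good-neighbor cut `F` of `T*_n` must contain the hub `v`: otherwise every vertex outside `F`
reaches `v`, because a leaf of the `i`-th star lying outside `F` has its only neighbor, the
center `w_i`, outside `F` as well, and `w_i` is adjacent to `v`. Each leaf of `v` then lies in
`F` too, its only neighbor being `v`. Conversely, `v` together with its `n - t - 1` leaves is a
1-good-neighbor cut: what remains are the `r ≥ 2` stars `K_{1,a_i-1}`, each with at least one edge.
-/

open SimpleGraph

/-- The tree T*_n: a star K_{1,n−t−1} with center v (Sum.inl), its leaves
(Sum.inr (Sum.inl _)), and r further stars, the i-th with center ⟨i,0⟩ and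
leaves ⟨i,k⟩ (k ≠ 0), with v joined to each center. -/
def Tstar (n t r : ℕ) (a : Fin r → ℕ) :
    SimpleGraph (Unit ⊕ Fin (n - t - 1) ⊕ (Σ i : Fin r, Fin (a i))) :=
  SimpleGraph.fromRel (fun x y =>
    match x, y with
    | Sum.inl _, Sum.inr (Sum.inl _) => True
    | Sum.inl _, Sum.inr (Sum.inr ⟨_, k⟩) => (k : ℕ) = 0
    | Sum.inr (Sum.inr ⟨i, k⟩), Sum.inr (Sum.inr ⟨j, l⟩) =>
        (i : ℕ) = (j : ℕ) ∧ (k : ℕ) = 0 ∧ (l : ℕ) ≠ 0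
    | _, _ => False)

lemma SimpleGraph.Reachable.apply_eq_of_forall_adj {V α : Type*} {G : SimpleGraph V} {f : V → α}
    (hf : ∀ ⦃x y⦄, G.Adj x y → f x = f y) {u w : V} (h : G.Reachable u w) : f u = f w := by
  rw [reachable_iff_reflTransGen] at h
  induction h with
  | refl => rfl
  | tail _ hadj ih => exact ih.trans (hf hadj)

section GoodNeighborCut

variable {V : Type*} [Fintype V] {G : SimpleGraph V}

lemma isGNCut_one_iff {F : Finset V} :
    IsGNCut G 1 F ↔ ¬ (G.induce ((↑F : Set V)ᶜ)).Preconnected ∧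
      ∀ v, v ∉ F → ∃ w, G.Adj v w ∧ w ∉ F := by
  refine and_congr_right' (forall₂_congr fun v _ => ?_)
  exact Nat.succ_le_iff.trans (Set.ncard_pos (Set.toFinite _))

lemma IsGNCut.notMem_of_forall_adj_eq {F : Finset V} (hF : IsGNCut G 1 F) {v w : V} (hv : v ∉ F)
    (hw : ∀ u, G.Adj v u → u = w) : w ∉ F := by
  obtain ⟨u, hvu, huF⟩ := (isGNCut_one_iff.mp hF).2 v hv
  exact hw u hvu ▸ huF

lemma gnConn_eq_card_of_forall_subset {g : ℕ} {F₀ : Finset V} (h₀ : IsGNCut G g F₀)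
    (hmin : ∀ F, IsGNCut G g F → F₀ ⊆ F) : gnConn G g = F₀.card :=
  IsLeast.csInf_eq ⟨⟨F₀, h₀, rfl⟩, by rintro _ ⟨F, hF, rfl⟩; exact Finset.card_le_card (hmin F hF)⟩

end GoodNeighborCut

namespace Tstar

variable {n t r : ℕ} {a : Fin r → ℕ}

abbrev Vertex (n t r : ℕ) (a : Fin r → ℕ) : Type :=
  Unit ⊕ Fin (n - t - 1) ⊕ (Σ i : Fin r, Fin (a i))

lemma adj_star_star_iff {i j : Fin r} {k : Fin (a i)} {l : Fin (a j)} :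
    (Tstar n t r a).Adj (.inr (.inr ⟨i, k⟩)) (.inr (.inr ⟨j, l⟩)) ↔
      i = j ∧ ((k : ℕ) = 0 ∧ (l : ℕ) ≠ 0 ∨ (k : ℕ) ≠ 0 ∧ (l : ℕ) = 0) := by
  by_cases hij : i = j
  · subst hij
    simp only [Tstar, fromRel_adj, ne_eq, Sum.inr.injEq, Sigma.mk.injEq, heq_iff_eq, Fin.ext_iff,
      true_and]
    omega
  · simp [Tstar, Fin.val_inj, hij, Ne.symm hij]

lemma eq_center_of_adj_star_leaf {i : Fin r} {k : Fin (a i)} (hk : (k : ℕ) ≠ 0)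
    {y : Vertex n t r a} (h : (Tstar n t r a).Adj (.inr (.inr ⟨i, k⟩)) y) :
    y = .inr (.inr ⟨i, ⟨0, k.pos⟩⟩) := by
  rcases y with _ | _ | ⟨j, l⟩
  · simp [Tstar, hk] at h
  · simp [Tstar] at h
  · obtain ⟨rfl, h | h⟩ := adj_star_star_iff.mp h
    · exact absurd h.1 hk
    · simp [Fin.ext_iff, h.2]

lemma hub_mem_of_isGNCut {F : Finset (Vertex n t r a)}
    (hF : IsGNCut (Tstar n t r a) 1 F) : .inl () ∈ F := by
  by_contra hv
  set s : Set (Vertex n t r a) := (↑F)ᶜ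
  have reach_hub :
      ∀ x (hx : x ∈ s), ((Tstar n t r a).induce s).Reachable ⟨x, hx⟩ ⟨.inl (), hv⟩ := by
    rintro (⟨⟩ | j | ⟨i, k⟩) hx
    · rfl
    · exact Adj.reachable (by simp [Tstar])
    · by_cases hk : (k : ℕ) = 0
      · exact Adj.reachable (by simp [Tstar, hk])
      · have hc : .inr (.inr ⟨i, ⟨0, k.pos⟩⟩) ∉ F :=
          hF.notMem_of_forall_adj_eq hx fun _ => eq_center_of_adj_star_leaf hk
        exact (Adj.reachable (v := ⟨_, hc⟩) (adj_star_star_iff.mpr ⟨rfl, .inr ⟨hk, rfl⟩⟩)).trans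
          (Adj.reachable (by simp [Tstar]))
  exact hF.1 fun u w => (reach_hub u u.2).trans (reach_hub w w.2).symm

def hubAndLeaves (n t r : ℕ) (a : Fin r → ℕ) : Finset (Vertex n t r a) :=
  insert (.inl ()) (Finset.univ.image (.inr ∘ .inl))

lemma hubAndLeaves_subset {F : Finset (Vertex n t r a)}
    (hF : IsGNCut (Tstar n t r a) 1 F) : hubAndLeaves n t r a ⊆ F := by
  have hub := hub_mem_of_isGNCut hF
  simp only [hubAndLeaves, Finset.insert_subset_iff, hub, true_and, Finset.image_subset_iff]
  intro j _
  by_contra hj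
  refine hF.notMem_of_forall_adj_eq hj (fun y h => ?_) hub
  rcases y with ⟨⟩ | _ | _ <;> simp [Tstar] at h ⊢

lemma card_hubAndLeaves (h : t < n) : (hubAndLeaves n t r a).card = n - t := by
  rw [hubAndLeaves, Finset.card_insert_of_notMem (by simp),
    Finset.card_image_of_injective _ (Sum.inr_injective.comp Sum.inl_injective)]
  simp only [Finset.card_univ, Fintype.card_fin]
  omega

def starIndex : Vertex n t r a → Option (Fin r)
  | .inr (.inr p) => some p.1
  | _ => none

lemma notMem_hubAndLeaves_iff {x : Vertex n t r a} :
    x ∉ hubAndLeaves n t r a ↔ ∃ p, x = .inr (.inr p) := by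
  rcases x with _ | _ | p <;> simp [hubAndLeaves]

lemma isGNCut_hubAndLeaves (hr : 2 ≤ r) (ha : ∀ i, 2 ≤ a i) :
    IsGNCut (Tstar n t r a) 1 (hubAndLeaves n t r a) := by
  refine isGNCut_one_iff.mpr ⟨fun hpre => ?_, fun x hx => ?_⟩
  · have hinv : ∀ ⦃x y : ((↑(hubAndLeaves n t r a) : Set (Vertex n t r a))ᶜ : Set _)⦄,
        ((Tstar n t r a).induce _).Adj x y → starIndex x.1 = starIndex y.1 := by
      rintro ⟨x, hx⟩ ⟨y, hy⟩ h
      obtain ⟨⟨i, k⟩, rfl⟩ := notMem_hubAndLeaves_iff.mp hx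
      obtain ⟨⟨j, l⟩, rfl⟩ := notMem_hubAndLeaves_iff.mp hy
      simp [starIndex, (adj_star_star_iff.mp h).1]
    have center_notMem (i : Fin r) : (.inr (.inr ⟨i, ⟨0, Nat.zero_lt_of_lt (ha i)⟩⟩) :
        Vertex n t r a) ∉ hubAndLeaves n t r a := by
      simp [hubAndLeaves]
    have hindex := (hpre ⟨_, center_notMem ⟨0, Nat.zero_lt_of_lt hr⟩⟩
      ⟨_, center_notMem ⟨1, hr⟩⟩).apply_eq_of_forall_adj hinv
    simp [starIndex] at hindex
  · obtain ⟨⟨i, k⟩, rfl⟩ := notMem_hubAndLeaves_iff.mp hx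
    by_cases hk : (k : ℕ) = 0
    · exact ⟨.inr (.inr ⟨i, ⟨1, ha i⟩⟩), adj_star_star_iff.mpr ⟨rfl, .inl ⟨hk, one_ne_zero⟩⟩,
        by simp [hubAndLeaves]⟩
    · exact ⟨.inr (.inr ⟨i, ⟨0, k.pos⟩⟩), adj_star_star_iff.mpr ⟨rfl, .inr ⟨hk, rfl⟩⟩,
        by simp [hubAndLeaves]⟩

end Tstar

theorem stmt10_general (n t r : ℕ) (a : Fin r → ℕ) (hr : 2 ≤ r) (ha : ∀ i, 2 ≤ a i)
    (ht4 : 4 ≤ t) (ht : 2 * t ≤ n + 2) :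
    gnConn (Tstar n t r a) 1 = n - t := by
  rw [gnConn_eq_card_of_forall_subset (Tstar.isGNCut_hubAndLeaves hr ha)
    fun _ => Tstar.hubAndLeaves_subset, Tstar.card_hubAndLeaves (by omega)]

/-- For 4 ≤ t ≤ (n+2)/2, r ≥ 2, a_i ≥ 2, ∑ a_i = t: κ^1(T*_n) = n − t. -/
theorem stmt10 (n t r : ℕ) (a : Fin r → ℕ) (hr : 2 ≤ r) (ha : ∀ i, 2 ≤ a i)
    (hsum : ∑ i, a i = t) (ht4 : 4 ≤ t) (ht : 2 * t ≤ n + 2) :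
    gnConn (Tstar n t r a) 1 = n - t :=
  stmt10_general n t r a hr ha ht4 ht
end

section
/- Let n, g, k be integers with 1 ≤ g ≤ ⌊(n−k−2)/2⌋ and 1 ≤ k ≤ n − 2g − 2. If G is a graph on n vertices with at least C(n,2) − (n−k−g)(g+1) + 1 edges and G has a g-good-neighbor cut, then κ^g(G) ≥ k. -/
open SimpleGraph

/-! If `F` is a `g`-good-neighbor cut with `#F < k`, split `G - F` into two nonempty sides `A`, `B`
with no edges between them. Each side contains a vertex together with its at least `g` neighbors
outside `F`, so `#A, #B ≥ g + 1`; since `#A + #B = n - #F ≥ n - k + 1`, this forces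
`#A * #B ≥ (g + 1) (n - k - g)`. These `#A * #B` non-edges contradict the edge bound. -/

theorem mul_add_le_mul_add_sq {R : Type*} [CommRing R] [LinearOrder R] [IsStrictOrderedRing R]
    {a b c : R} (ha : c ≤ a) (hb : c ≤ b) : c * (a + b) ≤ a * b + c ^ 2 := by
  nlinarith [mul_nonneg (sub_nonneg.2 ha) (sub_nonneg.2 hb)]

open Finset

namespace SimpleGraph

variable {V : Type*} (G : SimpleGraph V)

theorem exists_finset_separation_of_not_preconnected [DecidableEq V] {s : Finset V}
    (h : ¬ (G.induce (s : Set V)).Preconnected) :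
    ∃ A B : Finset V, A.Nonempty ∧ B.Nonempty ∧ Disjoint A B ∧ A ∪ B = s ∧
      ∀ a ∈ A, ∀ b ∈ B, ¬ G.Adj a b := by
  classical
  obtain ⟨u, v, huv⟩ : ∃ u v, ¬ (G.induce (s : Set V)).Reachable u v := by
    simpa [Preconnected] using h
  let reach (w : V) : Prop := ∃ hw : w ∈ (s : Set V), (G.induce (s : Set V)).Reachable u ⟨w, hw⟩
  refine ⟨s.filter reach, s.filter (¬ reach ·), ⟨u, ?_⟩, ⟨v, ?_⟩,
    disjoint_filter_filter_not _ _ _, filter_union_filter_not_eq _ _, ?_⟩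
  · exact mem_filter.2 ⟨u.2, u.2, .rfl⟩
  · exact mem_filter.2 ⟨v.2, fun ⟨_, hv⟩ => huv hv⟩
  · rintro a ha b hb hab
    obtain ⟨-, _, hua⟩ := mem_filter.1 ha
    obtain ⟨hbS, hub⟩ := mem_filter.1 hb
    exact hub ⟨hbS, hua.trans (Adj.reachable (G := G.induce _) hab)⟩

theorem ncard_neighborSet_sdiff_add_one_le_card [Fintype V] [DecidableEq V] {F X Y : Finset V}
    (hXY : X ∪ Y = Fᶜ) (hno : ∀ x ∈ X, ∀ y ∈ Y, ¬ G.Adj x y) {x : V} (hx : x ∈ X) :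
    (G.neighborSet x \ F).ncard + 1 ≤ #X := by
  have hsub : insert x (G.neighborSet x \ F) ⊆ X := by
    rintro y (rfl | ⟨hxy, hyF⟩)
    · exact hx
    · have hy : y ∈ X ∪ Y := hXY ▸ mem_compl.2 hyF
      exact (mem_union.1 hy).resolve_right fun hyY => hno x hx y hyY hxy
  have hx' : x ∉ G.neighborSet x \ F := fun h => G.loopless.irrefl x h.1
  rw [← Set.ncard_insert_of_notMem hx', ← Set.ncard_coe_finset X]
  exact Set.ncard_le_ncard hsub

theorem ncard_edgeSet_add_card_mul_card_le_choose_two [Fintype V] {A B : Finset V}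
    (hAB : Disjoint A B) (hno : ∀ a ∈ A, ∀ b ∈ B, ¬ G.Adj a b) :
    G.edgeSet.ncard + #A * #B ≤ (Fintype.card V).choose 2 := by
  classical
  let M := (A ×ˢ B).image fun p => s(p.1, p.2)
  have hM : #M = #A * #B := by
    rw [card_image_of_injOn, card_product]
    rintro ⟨a, b⟩ hab ⟨c, d⟩ hcd h
    simp only [coe_product, Set.mem_prod, mem_coe] at hab hcd
    rcases Sym2.eq_iff.1 h with ⟨rfl, rfl⟩ | ⟨rfl, rfl⟩
    · rfl
    · exact (Finset.disjoint_left.1 hAB hab.1 hcd.2).elim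
  have hGM : Disjoint G.edgeFinset M := by
    refine Finset.disjoint_right.2 fun e he heG => ?_
    obtain ⟨⟨a, b⟩, hab, rfl⟩ := mem_image.1 he
    exact hno a (mem_product.1 hab).1 b (mem_product.1 hab).2 (G.mem_edgeFinset.1 heG)
  have hsub : G.edgeFinset ∪ M ⊆ (⊤ : SimpleGraph V).edgeFinset := by
    refine union_subset (edgeFinset_mono le_top) fun e he => ?_
    obtain ⟨⟨a, b⟩, hab, rfl⟩ := mem_image.1 he
    obtain ⟨ha, hb⟩ := mem_product.1 hab
    exact mem_edgeFinset.2 fun h => Finset.disjoint_left.1 hAB ha (h ▸ hb)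
  calc G.edgeSet.ncard + #A * #B = #(G.edgeFinset ∪ M) := by
        rw [card_union_of_disjoint hGM, hM, ← coe_edgeFinset, Set.ncard_coe_finset]
    _ ≤ #(⊤ : SimpleGraph V).edgeFinset := card_le_card hsub
    _ = (Fintype.card V).choose 2 := card_edgeFinset_top_eq_card_choose_two

end SimpleGraph

theorem IsGNCut.exists_separation {V : Type*} [Fintype V] [DecidableEq V] {G : SimpleGraph V}
    {g : ℕ} {F : Finset V} (h : IsGNCut G g F) :
    ∃ A B : Finset V, Disjoint A B ∧ A ∪ B = Fᶜ ∧ (∀ a ∈ A, ∀ b ∈ B, ¬ G.Adj a b) ∧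
      g + 1 ≤ #A ∧ g + 1 ≤ #B := by
  obtain ⟨A, B, ⟨a, ha⟩, ⟨b, hb⟩, hAB, hunion, hno⟩ :=
    G.exists_finset_separation_of_not_preconnected (s := Fᶜ) (by rw [coe_compl]; exact h.1)
  have hno' : ∀ b ∈ B, ∀ a ∈ A, ¬ G.Adj b a := fun b hb a ha hba => hno a ha b hb hba.symm
  have haF : a ∉ F := mem_compl.1 (hunion ▸ mem_union_left _ ha)
  have hbF : b ∉ F := mem_compl.1 (hunion ▸ mem_union_right _ hb)
  refine ⟨A, B, hAB, hunion, hno, ?_, ?_⟩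
  · exact (Nat.add_le_add_right (h.2 a haF) 1).trans
      (G.ncard_neighborSet_sdiff_add_one_le_card hunion hno ha)
  · exact (Nat.add_le_add_right (h.2 b hbF) 1).trans
      (G.ncard_neighborSet_sdiff_add_one_le_card (union_comm A B ▸ hunion) hno' hb)

theorem stmt16_general {V : Type*} [Fintype V] (G : SimpleGraph V) (n k g : ℕ)
    (hn : Fintype.card V = n)
    (hedges : ((n.choose 2 : ℤ) - ((n : ℤ) - k - g) * ((g : ℤ) + 1) + 1)
      ≤ (G.edgeSet.ncard : ℤ))
    (hex : ∃ F : Finset V, IsGNCut G g F) :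
    k ≤ gnConn G g := by
  classical
  obtain ⟨F₀, hF₀⟩ := hex
  refine le_csInf ⟨_, F₀, hF₀, rfl⟩ ?_
  rintro _ ⟨F, hF, rfl⟩
  by_contra! hFk
  obtain ⟨A, B, hAB, hunion, hno, hA, hB⟩ := hF.exists_separation
  have hcard : #A + #B + #F = n := by
    rw [← card_union_of_disjoint hAB, hunion, card_compl_add_card, hn]
  have hmissing := G.ncard_edgeSet_add_card_mul_card_le_choose_two hAB hno
  have hprod := mul_add_le_mul_add_sq (c := ((g + 1 : ℕ) : ℤ))
    (Nat.cast_le.2 hA) (Nat.cast_le.2 hB)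
  rw [hn] at hmissing
  zify at hcard hmissing hFk
  push_cast at hprod
  nlinarith [mul_nonneg (by positivity : (0 : ℤ) ≤ g + 1) (by linarith : (0 : ℤ) ≤ k - 1 - #F)]

/-- If 1 ≤ g ≤ ⌊(n−k−2)/2⌋, 1 ≤ k ≤ n − 2g − 2, G has n vertices, at least
C(n,2) − (n−k−g)(g+1) + 1 edges, and a g-good-neighbor cut, then κ^g(G) ≥ k. -/
theorem stmt16 {V : Type*} [Fintype V] (G : SimpleGraph V) (n k g : ℕ)
    (hn : Fintype.card V = n) (hg : 1 ≤ g) (hk : 1 ≤ k)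
    (hbound : k + 2 * g + 2 ≤ n)
    (hedges : ((n.choose 2 : ℤ) - ((n : ℤ) - k - g) * ((g : ℤ) + 1) + 1)
      ≤ (G.edgeSet.ncard : ℤ))
    (hex : ∃ F : Finset V, IsGNCut G g F) :
    k ≤ gnConn G g :=
  stmt16_general G n k g hn hedges hex
end
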